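/- Let E₁ = {x : (x−μ₁)ᵀΣ₁⁻¹(x−μ₁) ≤ 1} and E₂ = {x : (x−μ₂)ᵀΣ₂⁻¹(x−μ₂) ≤ 1} be ellipsoids in ℝⁿ with Σ₁, Σ₂ positive definite. For any fixed direction l with ρ₁ = √(lᵀΣ₁l) > 0 and ρ₂ = √(lᵀΣ₂l) > 0, set κ = ρ₁ + ρ₂ and Σ = κ(Σ₁/ρ₁ + Σ₂/ρ₂). Then the Minkowski sum E₁ ⊕ E₂ is contained in the ellipsoid {x : (x − (μ₁+μ₂))ᵀ Σ⁻¹ (x − (μ₁+μ₂)) ≤ 1}. -/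

import Mathlib

/-!
For positive definite `A`, the form `q_A(u) = uᵀ A⁻¹ u` is the Legendre-type supremum
`sup_w (2 wᵀu - wᵀA w)`, attained at `w = A⁻¹ u`. Evaluating the supremum for `A + B` at its
maximiser and splitting it shows `q_{A+B}(u + v) ≤ q_A(u) + q_B(v)`. With `A = c₁ S₁`,
`B = c₂ S₂` and `c₁⁻¹ + c₂⁻¹ = 1` (here `cᵢ = κ / ρᵢ`), the right-hand side is a convex
combination of `q_{S₁}(u)` and `q_{S₂}(v)`, hence at most `1` on the two ellipsoids.
-/

open Matrix Pointwise

namespace Matrix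

variable {ι : Type*} [Fintype ι]

lemma IsHermitian.dotProduct_mulVec_comm {A : Matrix ι ι ℝ} (hA : A.IsHermitian) (x y : ι → ℝ) :
    x ⬝ᵥ A *ᵥ y = y ⬝ᵥ A *ᵥ x := by
  rw [← dotProduct_transpose_mulVec, ← conjTranspose_eq_transpose_of_trivial, hA.eq]

variable [DecidableEq ι]

lemma mulVec_nonsing_inv_mulVec {A : Matrix ι ι ℝ} (hA : IsUnit A.det) (u : ι → ℝ) :
    A *ᵥ (A⁻¹ *ᵥ u) = u := by
  rw [mulVec_mulVec, mul_nonsing_inv _ hA, one_mulVec]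

lemma PosDef.two_mul_dotProduct_sub_le {A : Matrix ι ι ℝ} (hA : A.PosDef) (u w : ι → ℝ) :
    2 * (w ⬝ᵥ u) - w ⬝ᵥ A *ᵥ w ≤ u ⬝ᵥ A⁻¹ *ᵥ u := by
  set z := A⁻¹ *ᵥ u
  have hz : A *ᵥ z = u := mulVec_nonsing_inv_mulVec hA.det_pos.ne'.isUnit u
  have hnonneg : 0 ≤ (w - z) ⬝ᵥ A *ᵥ (w - z) := by
    simpa using hA.posSemidef.dotProduct_mulVec_nonneg (w - z)
  rw [mulVec_sub, sub_dotProduct, dotProduct_sub, dotProduct_sub, hA.1.dotProduct_mulVec_comm z w,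
    hz, dotProduct_comm z u] at hnonneg
  linarith

lemma PosDef.dotProduct_add_inv_mulVec_add_le {A B : Matrix ι ι ℝ} (hA : A.PosDef)
    (hB : B.PosDef) (u v : ι → ℝ) :
    (u + v) ⬝ᵥ (A + B)⁻¹ *ᵥ (u + v) ≤ u ⬝ᵥ A⁻¹ *ᵥ u + v ⬝ᵥ B⁻¹ *ᵥ v := by
  set w := (A + B)⁻¹ *ᵥ (u + v)
  have hw : w ⬝ᵥ A *ᵥ w + w ⬝ᵥ B *ᵥ w = w ⬝ᵥ u + w ⬝ᵥ v := by
    rw [← dotProduct_add, ← dotProduct_add, ← add_mulVec,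
      mulVec_nonsing_inv_mulVec (hA.add hB).det_pos.ne'.isUnit]
  have hlhs : (u + v) ⬝ᵥ w = w ⬝ᵥ u + w ⬝ᵥ v := by rw [dotProduct_comm, dotProduct_add]
  linarith [hA.two_mul_dotProduct_sub_le u w, hB.two_mul_dotProduct_sub_le v w]

lemma dotProduct_smul_inv_mulVec {A : Matrix ι ι ℝ} (hA : IsUnit A.det) {c : ℝ} (hc : c ≠ 0)
    (x : ι → ℝ) : x ⬝ᵥ (c • A)⁻¹ *ᵥ x = c⁻¹ * (x ⬝ᵥ A⁻¹ *ᵥ x) := by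
  have : Invertible c := invertibleOfNonzero hc
  rw [inv_smul (A := A) c hA, invOf_eq_inv, smul_mulVec, dotProduct_smul, smul_eq_mul]

lemma PosDef.ellipsoid_add_ellipsoid_subset {S₁ S₂ : Matrix ι ι ℝ} (h₁ : S₁.PosDef) (h₂ : S₂.PosDef)
    {c₁ c₂ : ℝ} (hc₁ : 0 < c₁) (hc₂ : 0 < c₂) (hc : c₁⁻¹ + c₂⁻¹ ≤ 1) (μ₁ μ₂ : ι → ℝ) :
    {x : ι → ℝ | (x - μ₁) ⬝ᵥ S₁⁻¹ *ᵥ (x - μ₁) ≤ 1} +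
      {x : ι → ℝ | (x - μ₂) ⬝ᵥ S₂⁻¹ *ᵥ (x - μ₂) ≤ 1} ⊆
      {x : ι → ℝ | (x - (μ₁ + μ₂)) ⬝ᵥ (c₁ • S₁ + c₂ • S₂)⁻¹ *ᵥ (x - (μ₁ + μ₂)) ≤ 1} := by
  rintro _ ⟨a, ha, b, hb, rfl⟩
  simp only [Set.mem_ofPred_eq] at ha hb ⊢
  rw [show a + b - (μ₁ + μ₂) = (a - μ₁) + (b - μ₂) by abel]
  have hsum := (h₁.smul hc₁).dotProduct_add_inv_mulVec_add_le (h₂.smul hc₂) (a - μ₁) (b - μ₂)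
  rw [dotProduct_smul_inv_mulVec h₁.det_pos.ne'.isUnit hc₁.ne',
    dotProduct_smul_inv_mulVec h₂.det_pos.ne'.isUnit hc₂.ne'] at hsum
  calc _ ≤ _ := hsum
    _ ≤ c₁⁻¹ * 1 + c₂⁻¹ * 1 := by gcongr
    _ ≤ 1 := by rwa [mul_one, mul_one]

end Matrix

theorem minkowski_sum_ellipsoid_outer_general {n : ℕ}
    (Sig1 Sig2 : Matrix (Fin n) (Fin n) ℝ) (hSig1 : Sig1.PosDef) (hSig2 : Sig2.PosDef)
    (μ₁ μ₂ : Fin n → ℝ)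
    (r1 r2 κ : ℝ)
    (hr1pos : 0 < r1)
    (hr2pos : 0 < r2)
    (hκ : κ = r1 + r2)
    (Sig : Matrix (Fin n) (Fin n) ℝ)
    (hSig : Sig = κ • (r1⁻¹ • Sig1 + r2⁻¹ • Sig2)) :
    {x : Fin n → ℝ | (x - μ₁) ⬝ᵥ Sig1⁻¹ *ᵥ (x - μ₁) ≤ 1} +
      {x : Fin n → ℝ | (x - μ₂) ⬝ᵥ Sig2⁻¹ *ᵥ (x - μ₂) ≤ 1} ⊆
      {x : Fin n → ℝ | (x - (μ₁ + μ₂)) ⬝ᵥ Sig⁻¹ *ᵥ (x - (μ₁ + μ₂)) ≤ 1} := by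
  have hκpos : 0 < κ := hκ ▸ add_pos hr1pos hr2pos
  have hweights : (κ * r1⁻¹)⁻¹ + (κ * r2⁻¹)⁻¹ = 1 := by
    rw [mul_inv, mul_inv, inv_inv, inv_inv, hκ]
    field_simp
  rw [hSig, smul_add, smul_smul, smul_smul]
  exact hSig1.ellipsoid_add_ellipsoid_subset hSig2 (by positivity) (by positivity) hweights.le μ₁ μ₂

/-- Directional-scaling outer ellipsoidal approximation of the Minkowski sum of
two ellipsoids. -/
theorem minkowski_sum_ellipsoid_outer {n : ℕ}
    (Sig1 Sig2 : Matrix (Fin n) (Fin n) ℝ) (hSig1 : Sig1.PosDef) (hSig2 : Sig2.PosDef)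
    (μ₁ μ₂ : Fin n → ℝ) (l : Fin n → ℝ)
    (r1 r2 κ : ℝ)
    (hr1 : r1 = Real.sqrt (l ⬝ᵥ Sig1 *ᵥ l)) (hr1pos : 0 < r1)
    (hr2 : r2 = Real.sqrt (l ⬝ᵥ Sig2 *ᵥ l)) (hr2pos : 0 < r2)
    (hκ : κ = r1 + r2)
    (Sig : Matrix (Fin n) (Fin n) ℝ)
    (hSig : Sig = κ • (r1⁻¹ • Sig1 + r2⁻¹ • Sig2)) :
    {x : Fin n → ℝ | (x - μ₁) ⬝ᵥ Sig1⁻¹ *ᵥ (x - μ₁) ≤ 1} +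
      {x : Fin n → ℝ | (x - μ₂) ⬝ᵥ Sig2⁻¹ *ᵥ (x - μ₂) ≤ 1} ⊆
      {x : Fin n → ℝ | (x - (μ₁ + μ₂)) ⬝ᵥ Sig⁻¹ *ᵥ (x - (μ₁ + μ₂)) ≤ 1} :=
  minkowski_sum_ellipsoid_outer_general Sig1 Sig2 hSig1 hSig2 μ₁ μ₂ r1 r2 κ hr1pos hr2pos hκ Sig
    hSig
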